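/- For every g ∈ F and every natural number k, the set g·(ω∖{k}) belongs to F; moreover, ρ(g·(ω∖{k}), g) tends to 0 as k → ∞. -/

import Mathlib

open MeasureTheory Filter Set
open scoped ENNReal

noncomputable section

/-- `fEnum x` is the increasing enumeration `f_x : ω → ω` of the set `x ∈ [ω]^ω`. -/
def fEnum (x : Set ℕ) : ℕ → ℕ := Nat.nth (· ∈ x)

/-- The sequence `α^x ∈ [1/4,3/4]^ω` attached to `x ∈ [ω]^ω`:
`α^x_n = 1/4 + 1/(2·√(f_x⁻¹(n)+1))` if `n ∈ x` and `α^x_n = 1/4` otherwise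
(for `n ∈ x`, `f_x⁻¹(n)` is the number of elements of `x` below `n`). -/
noncomputable def alphaSeq (x : Set ℕ) (n : ℕ) : ℝ :=
  haveI := Classical.decPred (· ∈ x)
  if n ∈ x then 1/4 + 1/(2 * Real.sqrt ((Nat.count (· ∈ x) n : ℝ) + 1)) else 1/4

/-- `ρ(x,y) = Σ_n (α^x_n - α^y_n)² ∈ [0,∞]`. -/
noncomputable def rho (x y : Set ℕ) : ℝ≥0∞ :=
  ∑' n : ℕ, ENNReal.ofReal ((alphaSeq x n - alphaSeq y n)^2)

/-- `F = {g ∈ [ω]^ω : ρ(g,ω) < ∞}`. -/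
def Fset : Set (Set ℕ) := {g | g.Infinite ∧ rho g Set.univ < ⊤}

/-- The monoid operation `x · y = (f_y ∘ f_x)[ω]`. -/
def dotOp (x y : Set ℕ) : Set ℕ := Set.range (fEnum y ∘ fEnum x)

/-- `IsKakutaniProduct x μ` says that `μ` is the product measure
`μ^x = ∏_n (α^x_n δ_0 + (1 - α^x_n) δ_1)` on Cantor space `2^ω = ℕ → Bool`
(identifying `0` with `false` and `1` with `true`), i.e. `μ` is the Borel
probability measure giving each finite cylinder the corresponding product of
the coordinate weights.  These conditions determine `μ^x` uniquely. -/
def IsKakutaniProduct (x : Set ℕ) (μ : Measure (ℕ → Bool)) : Prop :=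
  IsProbabilityMeasure μ ∧
    ∀ (s : Finset ℕ) (f : ℕ → Bool),
      μ {g | ∀ n ∈ s, g n = f n} =
        ∏ n ∈ s, (if f n = false then ENNReal.ofReal (alphaSeq x n)
                  else ENNReal.ofReal (1 - alphaSeq x n))

/-- The subset of `ℕ` coded by a point of Cantor space. -/
def toSet (f : ℕ → Bool) : Set ℕ := {n | f n = true}

/-!
Write `α = α^g` and `β = α^ω`. Removing `k` from `ω` shifts `g` by one above `k`, so
`ρ(g·(ω∖{k}), g) = (1/4 - α_k)² + Σ_{n ≥ k} (α_n - α_{n+1})²`. Since `β` decreases to `1/4`, its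
consecutive differences are square-summable, and `ρ(g, ω) < ∞` transfers this to `α` by the
quasi-triangle inequality for `ρ`; the same inequality gives `ρ(g·(ω∖{k}), ω) < ∞`.
Finally `α_k - β_k → 0` and `β_k → 1/4`, and the tails of a convergent series tend to `0`.
-/

section SqDist

variable {ι : Type*}

def sqDist (u v : ι → ℝ) : ℝ≥0∞ := ∑' i, ENNReal.ofReal ((u i - v i) ^ 2)

lemma rho_eq_sqDist (x y : Set ℕ) : rho x y = sqDist (alphaSeq x) (alphaSeq y) := rfl

lemma sqDist_comm (u v : ι → ℝ) : sqDist u v = sqDist v u := by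
  simp only [sqDist, ← neg_sub (u _), neg_sq]

lemma ofReal_sq_sub_le (a b c : ℝ) :
    ENNReal.ofReal ((a - c) ^ 2) ≤
      2 * ENNReal.ofReal ((a - b) ^ 2) + 2 * ENNReal.ofReal ((b - c) ^ 2) := by
  rw [← ENNReal.ofReal_ofNat 2, ← ENNReal.ofReal_mul zero_le_two, ← ENNReal.ofReal_mul zero_le_two,
    ← ENNReal.ofReal_add (by positivity) (by positivity)]
  exact ENNReal.ofReal_le_ofReal (by nlinarith [sq_nonneg (a - 2 * b + c)])

lemma sqDist_le_two_mul_add (u v w : ι → ℝ) :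
    sqDist u w ≤ 2 * sqDist u v + 2 * sqDist v w := by
  simp only [sqDist, ← ENNReal.tsum_mul_left, ← ENNReal.tsum_add]
  exact ENNReal.tsum_le_tsum fun i => ofReal_sq_sub_le _ _ _

lemma sqDist_ne_top_trans {u v w : ι → ℝ} (huv : sqDist u v ≠ ⊤) (hvw : sqDist v w ≠ ⊤) :
    sqDist u w ≠ ⊤ :=
  ne_top_of_le_ne_top (by finiteness) (sqDist_le_two_mul_add u v w)

lemma sqDist_comp_le {κ : Type*} {f : κ → ι} (hf : f.Injective) (u v : ι → ℝ) :
    sqDist (u ∘ f) (v ∘ f) ≤ sqDist u v :=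
  ENNReal.tsum_comp_le_tsum_of_injective hf fun i => ENNReal.ofReal ((u i - v i) ^ 2)

lemma sqDist_ne_top_of_summable {u v : ι → ℝ} (h : Summable fun i => (u i - v i) ^ 2) :
    sqDist u v ≠ ⊤ := by
  rw [sqDist, ← ENNReal.ofReal_tsum_of_nonneg (fun i => sq_nonneg _) h]
  exact ENNReal.ofReal_ne_top

lemma tendsto_sub_of_sqDist_ne_top {u v : ℕ → ℝ} (h : sqDist u v ≠ ⊤) :
    Tendsto (fun n => u n - v n) atTop (nhds 0) := by
  have hsq : Tendsto (fun n => (u n - v n) ^ 2) atTop (nhds 0) := by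
    have := (ENNReal.tendsto_toReal ENNReal.zero_ne_top).comp
      (ENNReal.tendsto_atTop_zero_of_tsum_ne_top h)
    simpa [Function.comp_def, sq_nonneg] using this
  rw [tendsto_zero_iff_abs_tendsto_zero]
  simpa [Function.comp_def, Real.sqrt_sq_eq_abs] using hsq.sqrt

end SqDist

lemma summable_sq_sub_succ_of_antitone {u : ℕ → ℝ} (hu : Antitone u) {c : ℝ}
    (hc : ∀ n, c ≤ u n) : Summable fun n => (u n - u (n + 1)) ^ 2 := by
  have hd : ∀ n, 0 ≤ u n - u (n + 1) := fun n => sub_nonneg.mpr (hu n.le_succ)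
  have hsum : Summable fun n => u n - u (n + 1) := by
    refine summable_of_sum_range_le hd (c := u 0 - c) fun n => ?_
    rw [Finset.sum_range_sub']
    linarith [hc n]
  refine (hsum.mul_left (u 0 - c)).of_nonneg_of_le (fun n => sq_nonneg _) fun n => ?_
  rw [sq]
  exact mul_le_mul_of_nonneg_right (by linarith [hu (Nat.zero_le n), hc (n + 1)]) (hd n)

lemma sqDist_succ_ne_top {u v : ℕ → ℝ} (huv : sqDist u v ≠ ⊤)
    (hv : sqDist v (fun n => v (n + 1)) ≠ ⊤) : sqDist u (fun n => u (n + 1)) ≠ ⊤ := by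
  have hshift : sqDist (fun n => v (n + 1)) (fun n => u (n + 1)) ≠ ⊤ := by
    rw [sqDist_comm] at huv
    exact ne_top_of_le_ne_top huv (sqDist_comp_le (add_left_injective 1) v u)
  exact sqDist_ne_top_trans huv (sqDist_ne_top_trans hv hshift)

lemma count_image_strictMono {s : ℕ → ℕ} (hs : StrictMono s) (x : Set ℕ)
    [DecidablePred (· ∈ x)] [DecidablePred (· ∈ s '' x)] (n : ℕ) :
    Nat.count (· ∈ s '' x) (s n) = Nat.count (· ∈ x) n := by
  simp only [Nat.count_eq_card_filter_range]
  conv_rhs => rw [← Finset.card_image_of_injective _ hs.injective]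
  congr 1
  ext m
  simp only [Finset.mem_filter, Finset.mem_range, Finset.mem_image, Set.mem_image]
  constructor
  · rintro ⟨hm, j, hj, rfl⟩
    exact ⟨j, ⟨hs.lt_iff_lt.mp hm, hj⟩, rfl⟩
  · rintro ⟨j, ⟨hjn, hj⟩, rfl⟩
    exact ⟨hs hjn, j, hj, rfl⟩

lemma alphaSeq_image_apply {s : ℕ → ℕ} (hs : StrictMono s) (x : Set ℕ) (n : ℕ) :
    alphaSeq (s '' x) (s n) = alphaSeq x n := by
  classical
  simp only [alphaSeq, hs.injective.mem_set_image, count_image_strictMono hs]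

lemma alphaSeq_of_notMem {x : Set ℕ} {n : ℕ} (h : n ∉ x) : alphaSeq x n = 1 / 4 := by
  simp [alphaSeq, h]

lemma alphaSeq_univ (n : ℕ) : alphaSeq univ n = 1 / 4 + 1 / (2 * √((n : ℝ) + 1)) := by
  simp [alphaSeq, Nat.count_eq_card_filter_range]

lemma antitone_alphaSeq_univ : Antitone (alphaSeq univ) := by
  intro m n hmn
  simp only [alphaSeq_univ]
  gcongr

lemma one_div_four_le_alphaSeq_univ (n : ℕ) : 1 / 4 ≤ alphaSeq univ n := by
  rw [alphaSeq_univ]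
  have : 0 ≤ 1 / (2 * √((n : ℝ) + 1)) := by positivity
  linarith

lemma tendsto_alphaSeq_univ : Tendsto (alphaSeq univ) atTop (nhds (1 / 4)) := by
  have hsqrt : Tendsto (fun n : ℕ => 2 * √((n : ℝ) + 1)) atTop atTop :=
    (Real.tendsto_sqrt_atTop.comp
      (tendsto_atTop_add_const_right _ 1 tendsto_natCast_atTop_atTop)).const_mul_atTop two_pos
  simpa [funext alphaSeq_univ] using tendsto_const_nhds.add hsqrt.inv_tendsto_atTop

lemma sqDist_alphaSeq_univ_succ_ne_top :
    sqDist (alphaSeq univ) (fun n => alphaSeq univ (n + 1)) ≠ ⊤ :=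
  sqDist_ne_top_of_summable
    (summable_sq_sub_succ_of_antitone antitone_alphaSeq_univ one_div_four_le_alphaSeq_univ)

lemma tendsto_alphaSeq_of_rho_univ_ne_top {x : Set ℕ} (h : rho x univ ≠ ⊤) :
    Tendsto (alphaSeq x) atTop (nhds (1 / 4)) := by
  rw [rho_eq_sqDist] at h
  simpa using (tendsto_sub_of_sqDist_ne_top h).add tendsto_alphaSeq_univ

lemma sqDist_alphaSeq_succ_ne_top {x : Set ℕ} (h : rho x univ ≠ ⊤) :
    sqDist (alphaSeq x) (fun n => alphaSeq x (n + 1)) ≠ ⊤ := by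
  rw [rho_eq_sqDist] at h
  exact sqDist_succ_ne_top h sqDist_alphaSeq_univ_succ_ne_top

section Skip

def skip (k m : ℕ) : ℕ := if m < k then m else m + 1

variable (k : ℕ)

lemma strictMono_skip : StrictMono (skip k) := by
  intro a b hab
  unfold skip
  split_ifs <;> omega

lemma range_skip : range (skip k) = {n | n ≠ k} := by
  ext n
  change (∃ m, skip k m = n) ↔ n ≠ k
  unfold skip
  constructor
  · rintro ⟨m, rfl⟩
    split_ifs <;> omega
  · intro hn
    rcases lt_or_gt_of_ne hn with h | h
    · exact ⟨n, if_pos h⟩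
    · exact ⟨n - 1, by split_ifs <;> omega⟩

lemma fEnum_ne : fEnum {n | n ≠ k} = skip k := by
  have hinf : {n | n ≠ k}.Infinite := (finite_singleton k).infinite_compl
  refine (StrictMono.range_inj (Nat.nth_strictMono hinf) (strictMono_skip k)).mp ?_
  rw [Nat.range_nth_of_infinite hinf, range_skip]

lemma rho_image_skip (x : Set ℕ) :
    rho (skip k '' x) x = ENNReal.ofReal ((1 / 4 - alphaSeq x k) ^ 2) +
      ∑' n, ENNReal.ofReal ((alphaSeq x (n + k) - alphaSeq x (n + k + 1)) ^ 2) := by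
  have h_lt {n : ℕ} (hn : n < k) : alphaSeq (skip k '' x) n = alphaSeq x n := by
    simpa [skip, hn] using alphaSeq_image_apply (strictMono_skip k) x n
  have h_self : alphaSeq (skip k '' x) k = 1 / 4 :=
    alphaSeq_of_notMem fun ⟨m, _, hm⟩ => by unfold skip at hm; split_ifs at hm <;> omega
  have h_gt (n : ℕ) : alphaSeq (skip k '' x) (n + k + 1) = alphaSeq x (n + k) := by
    simpa [skip] using alphaSeq_image_apply (strictMono_skip k) x (n + k)
  rw [rho, ← ENNReal.summable.sum_add_tsum_nat_add' (k := k),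
    Finset.sum_eq_zero fun n hn => by simp [h_lt (Finset.mem_range.mp hn)],
    tsum_eq_zero_add' ENNReal.summable]
  simp only [zero_add, h_self, h_gt, add_right_comm _ 1 k]

end Skip

lemma dotOp_eq_image {x : Set ℕ} (hx : x.Infinite) (y : Set ℕ) : dotOp x y = fEnum y '' x := by
  rw [dotOp, range_comp]
  exact congrArg _ (Nat.range_nth_of_infinite hx)

/-- For `g ∈ F` and `k ∈ ω`, `g·(ω∖{k}) ∈ F`, and `ρ(g·(ω∖{k}), g) → 0`
as `k → ∞`. -/
theorem dotOp_compl_singleton (g : Set ℕ) (hg : g ∈ Fset) :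
    (∀ k : ℕ, dotOp g {n : ℕ | n ≠ k} ∈ Fset) ∧
    Filter.Tendsto (fun k : ℕ => rho (dotOp g {n : ℕ | n ≠ k}) g)
      Filter.atTop (nhds 0) := by
  obtain ⟨hg_inf, hg_rho⟩ := hg
  have h_eq (k : ℕ) : dotOp g {n | n ≠ k} = skip k '' g := by
    rw [dotOp_eq_image hg_inf, fEnum_ne]
  have h_succ := sqDist_alphaSeq_succ_ne_top hg_rho.ne
  refine ⟨fun k => ⟨?_, ?_⟩, ?_⟩
  · rw [h_eq]
    exact hg_inf.image (strictMono_skip k).injective.injOn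
  · have h_rho : rho (skip k '' g) g ≠ ⊤ := by
      rw [rho_image_skip]
      exact ENNReal.add_ne_top.mpr ⟨ENNReal.ofReal_ne_top, ne_top_of_le_ne_top h_succ
        (ENNReal.tsum_comp_le_tsum_of_injective (add_left_injective k) _)⟩
    rw [h_eq, lt_top_iff_ne_top, rho_eq_sqDist]
    exact sqDist_ne_top_trans h_rho hg_rho.ne
  · simp only [h_eq, rho_image_skip]
    have h_first := (ENNReal.continuous_ofReal.tendsto _).comp
      (((tendsto_const_nhds (x := (1 / 4 : ℝ))).sub
        (tendsto_alphaSeq_of_rho_univ_ne_top hg_rho.ne)).pow 2)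
    simpa using h_first.add (ENNReal.tendsto_sum_nat_add _ h_succ)

end
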